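/- Let I ⊆ R be a monomial ideal with linear quotients whose decomposition function b is regular, let m ∈ G(I), α ⊆ set(m) with |α| = p, and let σ be a permutation of α with ch(m,α,σ) nondegenerate, with vertex monomials m_0 = m, m_i = b(x_{σ_i} · m_{i−1}). Fix 1 ≤ ℓ ≤ p−1 and let F be the facet of ch(m,α,σ) spanned by the exponent vectors of {m_0,…,m_p} ∖ {m_ℓ}. Then: (a) if σ_ℓ ∈ set(b(x_{σ_{ℓ+1}} · m_{ℓ−1})), then F is an interior facet, and the only two nondegenerate simplices of the form ch(m,α,τ) containing F as a facet are ch(m,α,σ) and ch(m,α,σ′), where σ′ = (σ_1,…,σ_{ℓ−1},σ_{ℓ+1},σ_ℓ,σ_{ℓ+2},…,σ_p) is obtained from σ by swapping positions ℓ and ℓ+1; (b) if σ_ℓ ∉ set(b(x_{σ_{ℓ+1}} · m_{ℓ−1})), then F is exterior, i.e., ch(m,α,σ) is the only nondegenerate simplex of the form ch(m,α,τ) containing F as a facet. -/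

import Mathlib

open MvPolynomial

/-- The monomial ideal generated by a set of exponent vectors. -/
noncomputable def genIdeal (K : Type*) [Field K] {n : ℕ} (ms : Set (Fin n →₀ ℕ)) :
    Ideal (MvPolynomial (Fin n) K) :=
  Ideal.span ((fun u => MvPolynomial.monomial u (1 : K)) '' ms)

/-- The colon ideal `⟨m_1, …, m_{j-1}⟩ : m_j`. -/
noncomputable def colonJ (K : Type*) [Field K] {n k : ℕ} (m : Fin k → (Fin n →₀ ℕ))
    (j : Fin k) : Ideal (MvPolynomial (Fin n) K) :=
  Submodule.colon (genIdeal K {u | ∃ i : Fin k, i < j ∧ u = m i})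
    (Ideal.span {MvPolynomial.monomial (m j) (1 : K)})

/-- `I` has linear quotients w.r.t. the ordering `m_1,…,m_k` of its generators:
each colon ideal is generated by a subset of the variables. -/
def HasLinearQuotients (K : Type*) [Field K] {n k : ℕ}
    (m : Fin k → (Fin n →₀ ℕ)) : Prop :=
  ∀ j : Fin k, ∃ S : Set (Fin n),
    colonJ K m j = Ideal.span ((fun s => (MvPolynomial.X s : MvPolynomial (Fin n) K)) '' S)

/-- `set(m_j) = {i : x_i ∈ ⟨m_1,…,m_{j-1}⟩ : m_j}`. -/
def mset (K : Type*) [Field K] {n k : ℕ} (m : Fin k → (Fin n →₀ ℕ)) (j : Fin k) :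
    Set (Fin n) :=
  {t | (MvPolynomial.X t : MvPolynomial (Fin n) K) ∈ colonJ K m j}

/-- The `m i` are minimal monomial generators: none divides another. -/
def MinimalGens {n k : ℕ} (m : Fin k → (Fin n →₀ ℕ)) : Prop :=
  ∀ i j : Fin k, m i ≤ m j → i = j

/-- `b` is the decomposition function: for a monomial `u ∈ I`, `b u` is the smallest
index `j` with `u ∈ ⟨m_1,…,m_j⟩`. -/
def IsDecompositionFunction (K : Type*) [Field K] {n k : ℕ}
    (m : Fin k → (Fin n →₀ ℕ)) (b : (Fin n →₀ ℕ) → Fin k) : Prop :=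
  ∀ u : Fin n →₀ ℕ, MvPolynomial.monomial u (1 : K) ∈ genIdeal K (Set.range m) →
    (MvPolynomial.monomial u (1 : K) ∈ genIdeal K {v | ∃ i : Fin k, i ≤ b u ∧ v = m i}) ∧
    (∀ j : Fin k,
      MvPolynomial.monomial u (1 : K) ∈ genIdeal K {v | ∃ i : Fin k, i ≤ j ∧ v = m i} →
      b u ≤ j)

/-- The decomposition function is regular: `set(b(x_t·m)) ⊆ set(m)` for every
generator `m` and every `t ∈ set(m)`. -/
def IsRegularDecomp (K : Type*) [Field K] {n k : ℕ}
    (m : Fin k → (Fin n →₀ ℕ)) (b : (Fin n →₀ ℕ) → Fin k) : Prop :=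
  ∀ j : Fin k, ∀ t ∈ mset K m j,
    mset K m (b (m j + Finsupp.single t 1)) ⊆ mset K m j

/-- The sequence of vertex monomials `m_0 = m₀`, `m_{i+1} = b(x_{σ(i)} · m_i)` of the
simplex `ch(m, α, σ)` (here `σ` is 0-indexed: `σ 0, …, σ (p-1)` is the permutation). -/
noncomputable def chainSeq {n k : ℕ} (m : Fin k → (Fin n →₀ ℕ)) (b : (Fin n →₀ ℕ) → Fin k)
    (m0 : Fin n →₀ ℕ) (σ : ℕ → Fin n) : ℕ → (Fin n →₀ ℕ)
  | 0 => m0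
  | i + 1 => m (b (chainSeq m b m0 σ i + Finsupp.single (σ i) 1))

/-- `σ 0, …, σ (p-1)` is a permutation (an ordering) of the finite set `α`. -/
def PermOf {n : ℕ} (σ : ℕ → Fin n) (p : ℕ) (α : Finset (Fin n)) : Prop :=
  Set.InjOn σ (Set.Iio p) ∧ ∀ a : Fin n, a ∈ α ↔ ∃ i < p, σ i = a

/-- `ch(m,α,σ)` is nondegenerate: the vertex monomials `m_0, …, m_p` are pairwise
distinct. -/
def Nondeg {n k : ℕ} (m : Fin k → (Fin n →₀ ℕ)) (b : (Fin n →₀ ℕ) → Fin k)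
    (m0 : Fin n →₀ ℕ) (σ : ℕ → Fin n) (p : ℕ) : Prop :=
  Set.InjOn (chainSeq m b m0 σ) (Set.Iic p)

/-- A monomial (exponent vector) regarded as a point of `ℝⁿ`. -/
def toR {n : ℕ} (u : Fin n →₀ ℕ) : Fin n → ℝ := fun a => (u a : ℝ)

/-- The set of vertex monomials of `ch(m,α,σ)`. -/
def vertSet {n k : ℕ} (m : Fin k → (Fin n →₀ ℕ)) (b : (Fin n →₀ ℕ) → Fin k)
    (m0 : Fin n →₀ ℕ) (σ : ℕ → Fin n) (p : ℕ) : Set (Fin n →₀ ℕ) :=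
  {v | ∃ i ≤ p, v = chainSeq m b m0 σ i}

/-- The permutation obtained from `σ` by swapping positions `c` and `c+1`. -/
def swapAdj {n : ℕ} (σ : ℕ → Fin n) (c : ℕ) : ℕ → Fin n :=
  fun i => if i = c then σ (c + 1) else if i = c + 1 then σ c else σ i

/-- `F` (a set of vertex monomials) is a facet of the simplex `ch(m,α,τ)`: it is
obtained from the vertex set by removing exactly one vertex. -/
def IsFacetOf {n k : ℕ} (m : Fin k → (Fin n →₀ ℕ)) (b : (Fin n →₀ ℕ) → Fin k)
    (m0 : Fin n →₀ ℕ) (τ : ℕ → Fin n) (p : ℕ) (F : Set (Fin n →₀ ℕ)) : Prop :=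
  ∃ i ≤ p, F = vertSet m b m0 τ p \ {chainSeq m b m0 τ i}

/-!
For a regular decomposition function of an ideal with linear quotients, `b(x_r·u) = b(x_r·b(u))`
for every monomial `u ∈ I`; hence two steps of a chain commute,
`b(x_s·b(x_t·g)) = b(x_t·b(x_s·g))`. Along a nondegenerate chain the generator indices strictly
decrease and the sets `set(m_i)` shrink, and the step `m_{i-1} → m_i` raises exactly the
`σ_i`-coordinate, so equal consecutive vertices of two chains force equal entries of the
permutations.

Let `ch(m,α,τ)` be nondegenerate with `F` its facet opposite the vertex `m'_i`. Both chains list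
the vertices of `F` by decreasing generator index, so they agree up to a shift. If `i = ℓ`, then
`τ` agrees with `σ` outside positions `ℓ, ℓ+1`, so `τ = σ` or `τ = σ'`, and `σ'` is nondegenerate
exactly when `σ_ℓ ∈ set(b(x_{σ_{ℓ+1}}·m_{ℓ-1}))`. If `i ≠ ℓ`, counting entries of the two
permutations gives `τ_i = σ_ℓ`, and commuting two steps produces a generator `g` with
`σ_ℓ ∈ set(g)` yet `b(x_{σ_ℓ}·g) = g`, which is impossible.

In the code permutations are 0-based, so `σ_i` is `σ (i - 1)` and `ℓ = c + 1`.
-/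

open Finsupp (single)

section

variable {K : Type*} [Field K] {n k : ℕ} {m : Fin k → (Fin n →₀ ℕ)}

theorem monomial_mem_genIdeal_iff {S : Set (Fin n →₀ ℕ)} {u : Fin n →₀ ℕ} :
    monomial u (1 : K) ∈ genIdeal K S ↔ ∃ v ∈ S, v ≤ u := by
  simp [genIdeal, mem_ideal_span_monomial_image]

theorem mem_colonJ_iff {j : Fin k} {f : MvPolynomial (Fin n) K} :
    f ∈ colonJ K m j ↔ f * monomial (m j) 1 ∈ genIdeal K {u | ∃ i < j, u = m i} := by
  rw [colonJ, Submodule.mem_colon_span_singleton, smul_eq_mul]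

theorem mem_mset_iff {j : Fin k} {t : Fin n} :
    t ∈ mset K m j ↔ ∃ i < j, m i ≤ m j + single t 1 := by
  simp [mset, mem_colonJ_iff, X, monomial_mul, monomial_mem_genIdeal_iff, add_comm]

theorem HasLinearQuotients.exists_mem_mset (hlq : HasLinearQuotients K m) {j : Fin k}
    {z : Fin n →₀ ℕ} (h : ∃ i < j, m i ≤ m j + z) : ∃ s ∈ mset K m j, z s ≠ 0 := by
  obtain ⟨S, hS⟩ := hlq j
  have hz : monomial z (1 : K) ∈ colonJ K m j := by
    rw [mem_colonJ_iff, monomial_mul, one_mul, monomial_mem_genIdeal_iff]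
    obtain ⟨i, hij, hi⟩ := h
    exact ⟨m i, ⟨i, hij, rfl⟩, by rwa [add_comm]⟩
  rw [hS, mem_ideal_span_X_image] at hz
  obtain ⟨s, hsS, hzs⟩ := hz z (by simp)
  exact ⟨s, by rw [mset, Set.mem_ofPred_eq, hS]; exact Ideal.subset_span ⟨s, hsS, rfl⟩, hzs⟩

theorem MinimalGens.injective (hmin : MinimalGens m) : Function.Injective m :=
  fun i j h => hmin i j h.le

variable {b : (Fin n →₀ ℕ) → Fin k}

theorem IsDecompositionFunction.le_of_gen_le (hb : IsDecompositionFunction K m b)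
    {u : Fin n →₀ ℕ} {i : Fin k} (hi : m i ≤ u) : b u ≤ i :=
  (hb u (monomial_mem_genIdeal_iff.2 ⟨m i, ⟨i, rfl⟩, hi⟩)).2 i
    (monomial_mem_genIdeal_iff.2 ⟨m i, ⟨i, le_rfl, rfl⟩, hi⟩)

theorem IsDecompositionFunction.gen_le (hb : IsDecompositionFunction K m b)
    {u : Fin n →₀ ℕ} {i : Fin k} (hi : m i ≤ u) : m (b u) ≤ u := by
  obtain ⟨_, ⟨i', hi', rfl⟩, hle⟩ := monomial_mem_genIdeal_iff.1
    (hb u (monomial_mem_genIdeal_iff.2 ⟨m i, ⟨i, rfl⟩, hi⟩)).1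
  rwa [le_antisymm hi' (hb.le_of_gen_le hle)] at hle

theorem IsDecompositionFunction.step_le (hb : IsDecompositionFunction K m b) (g : Fin k)
    (t : Fin n) : b (m g + single t 1) ≤ g :=
  hb.le_of_gen_le le_self_add

theorem IsDecompositionFunction.step_lt_iff (hb : IsDecompositionFunction K m b) {g : Fin k}
    {t : Fin n} : b (m g + single t 1) < g ↔ t ∈ mset K m g := by
  refine ⟨fun h => mem_mset_iff.2 ⟨_, h, hb.gen_le le_self_add⟩, fun h => ?_⟩
  obtain ⟨i, hi, hle⟩ := mem_mset_iff.1 h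
  exact (hb.le_of_gen_le hle).trans_lt hi

theorem IsDecompositionFunction.step_eq (hb : IsDecompositionFunction K m b) {g : Fin k}
    {t : Fin n} (ht : t ∉ mset K m g) : b (m g + single t 1) = g :=
  (hb.step_le g t).antisymm (not_lt.1 (mt hb.step_lt_iff.1 ht))

theorem IsDecompositionFunction.gen_apply_of_mem_mset (hb : IsDecompositionFunction K m b)
    {u : Fin n →₀ ℕ} {i : Fin k} (hi : m i ≤ u) {ρ : Fin n} (hρ : ρ ∈ mset K m (b u)) :
    m (b u) ρ = u ρ := by
  by_contra hne
  have hlt : m (b u) ρ < u ρ := lt_of_le_of_ne (hb.gen_le hi ρ) hne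
  have hdvd : m (b u) + single ρ 1 ≤ u := fun a => by
    rcases eq_or_ne ρ a with rfl | ha
    · simpa using hlt
    · simpa [Finsupp.single_apply, ha] using hb.gen_le hi a
  exact (hb.step_lt_iff.2 hρ).not_ge (hb.le_of_gen_le ((hb.gen_le le_self_add).trans hdvd))

theorem IsRegularDecomp.mset_step_subset (hreg : IsRegularDecomp K m b)
    (hb : IsDecompositionFunction K m b) (g : Fin k) (t : Fin n) :
    mset K m (b (m g + single t 1)) ⊆ mset K m g := by
  by_cases ht : t ∈ mset K m g
  · exact hreg g t ht
  · rw [hb.step_eq ht]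

-- If `b (x_r u)` were smaller than `b (x_r m_{b u})`, the linear quotient at the latter would give
-- a variable, lying in `set(b u)` by regularity, at which `u` exceeds `m_{b u}`.
theorem decomp_add_single (hlq : HasLinearQuotients K m) (hb : IsDecompositionFunction K m b)
    (hreg : IsRegularDecomp K m b) {u : Fin n →₀ ℕ} {i : Fin k} (hi : m i ≤ u) (r : Fin n) :
    b (u + single r 1) = b (m (b u) + single r 1) := by
  have hg : m (b u) ≤ u := hb.gen_le hi
  have hg' : m (b (m (b u) + single r 1)) ≤ u + single r 1 :=
    (hb.gen_le le_self_add).trans (add_le_add_left hg _)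
  refine (hb.le_of_gen_le hg').antisymm (not_lt.1 fun hlt => ?_)
  obtain ⟨s, hs, hzs⟩ := hlq.exists_mem_mset (z := u + single r 1 - m (b (m (b u) + single r 1)))
    ⟨_, hlt, by rw [add_tsub_cancel_of_le hg']; exact hb.gen_le hg'⟩
  have h1 := hb.gen_apply_of_mem_mset le_self_add hs
  have h2 := hb.gen_apply_of_mem_mset hi (hreg.mset_step_subset hb _ r hs)
  simp [h1, h2] at hzs

theorem decomp_step_comm (hlq : HasLinearQuotients K m) (hb : IsDecompositionFunction K m b)
    (hreg : IsRegularDecomp K m b) (g : Fin k) (s t : Fin n) :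
    b (m (b (m g + single t 1)) + single s 1) = b (m (b (m g + single s 1)) + single t 1) := by
  rw [← decomp_add_single hlq hb hreg le_self_add, ← decomp_add_single hlq hb hreg le_self_add,
    add_right_comm]

theorem apply_lt_step_apply (hmin : MinimalGens m) (hb : IsDecompositionFunction K m b)
    {g : Fin k} {x : Fin n} (hne : b (m g + single x 1) ≠ g) :
    m g x < m (b (m g + single x 1)) x := by
  by_contra! hle
  refine hne (hmin _ _ fun a => ?_)
  rcases eq_or_ne x a with rfl | ha
  · exact hle
  · simpa [Finsupp.single_apply, ha] using hb.gen_le (u := m g + single x 1) le_self_add a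

theorem eq_of_step_eq (hmin : MinimalGens m) (hb : IsDecompositionFunction K m b)
    {g : Fin k} {x y : Fin n} (h : b (m g + single x 1) = b (m g + single y 1))
    (hne : b (m g + single x 1) ≠ g) : x = y := by
  have hx := apply_lt_step_apply hmin hb hne
  have hy := hb.gen_le (u := m g + single y 1) le_self_add x
  rw [← h] at hy
  by_contra hxy
  simp [Ne.symm hxy] at hy
  omega

noncomputable def chainIdx (m : Fin k → (Fin n →₀ ℕ)) (b : (Fin n →₀ ℕ) → Fin k) (j : Fin k)
    (σ : ℕ → Fin n) : ℕ → Fin k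
  | 0 => j
  | i + 1 => b (m (chainIdx m b j σ i) + single (σ i) 1)

section Chain

variable {j : Fin k} {σ τ : ℕ → Fin n} {p : ℕ}

theorem chainIdx_succ (i : ℕ) :
    chainIdx m b j σ (i + 1) = b (m (chainIdx m b j σ i) + single (σ i) 1) := rfl

theorem chainSeq_eq_comp_chainIdx : chainSeq m b (m j) σ = m ∘ chainIdx m b j σ := by
  funext i
  induction i with
  | zero => rfl
  | succ i ih => rw [chainSeq, ih]; rfl

theorem chainSeq_eqOn_of_eqOn {m0 : Fin n →₀ ℕ} (h : Set.EqOn τ σ (Set.Iio p)) :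
    Set.EqOn (chainSeq m b m0 τ) (chainSeq m b m0 σ) (Set.Iic p) := by
  intro i hi
  induction i with
  | zero => rfl
  | succ i ih =>
    simp only [Set.mem_Iic] at hi
    rw [chainSeq, chainSeq, ih (Set.mem_Iic.2 (by omega)), h (Set.mem_Iio.2 hi)]

theorem vertSet_eq_image {m0 : Fin n →₀ ℕ} :
    vertSet m b m0 σ p = chainSeq m b m0 σ '' Set.Iic p := by
  ext v
  simp [vertSet, eq_comm]

theorem vertSet_eq_of_eqOn {m0 : Fin n →₀ ℕ} (h : Set.EqOn τ σ (Set.Iio p)) :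
    vertSet m b m0 τ p = vertSet m b m0 σ p := by
  rw [vertSet_eq_image, vertSet_eq_image, (chainSeq_eqOn_of_eqOn h).image_eq]

theorem vertSet_diff_eq_image {m0 : Fin n →₀ ℕ} (hnd : Nondeg m b m0 σ p) {i : ℕ} (hi : i ≤ p) :
    vertSet m b m0 σ p \ {chainSeq m b m0 σ i} = chainSeq m b m0 σ '' (Set.Iic p \ {i}) := by
  rw [vertSet_eq_image, hnd.image_sdiff_subset (Set.singleton_subset_iff.2 hi),
    Set.image_singleton]

theorem mset_chainIdx_antitone (hb : IsDecompositionFunction K m b)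
    (hreg : IsRegularDecomp K m b) : Antitone fun i => mset K m (chainIdx m b j σ i) :=
  antitone_nat_of_succ_le fun _ => hreg.mset_step_subset hb _ _

theorem nondeg_iff_injOn (hmin : MinimalGens m) :
    Nondeg m b (m j) σ p ↔ Set.InjOn (chainIdx m b j σ) (Set.Iic p) := by
  rw [Nondeg, chainSeq_eq_comp_chainIdx]
  exact ⟨Set.InjOn.of_comp, hmin.injective.comp_injOn⟩

theorem strictAntiOn_chainIdx (hb : IsDecompositionFunction K m b)
    (h : ∀ i < p, σ i ∈ mset K m (chainIdx m b j σ i)) :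
    StrictAntiOn (chainIdx m b j σ) (Set.Iic p) :=
  strictAntiOn_Iic_of_succ_lt fun i hi => by
    rw [Order.succ_eq_add_one, chainIdx_succ]
    exact hb.step_lt_iff.2 (h i hi)

theorem nondeg_iff (hmin : MinimalGens m) (hb : IsDecompositionFunction K m b) :
    Nondeg m b (m j) σ p ↔ ∀ i < p, σ i ∈ mset K m (chainIdx m b j σ i) := by
  rw [nondeg_iff_injOn hmin]
  refine ⟨fun h i hi => by_contra fun hσi => ?_, fun h => (strictAntiOn_chainIdx hb h).injOn⟩
  have := h (Set.mem_Iic.2 hi) (Set.mem_Iic.2 hi.le) (hb.step_eq hσi)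
  omega

theorem Nondeg.strictAntiOn (hmin : MinimalGens m) (hb : IsDecompositionFunction K m b)
    (hnd : Nondeg m b (m j) σ p) : StrictAntiOn (chainIdx m b j σ) (Set.Iic p) :=
  strictAntiOn_chainIdx hb ((nondeg_iff hmin hb).1 hnd)

end Chain

section Swap

variable {j : Fin k} {σ : ℕ → Fin n} {p c : ℕ} {α : Finset (Fin n)}

theorem swapAdj_eq_comp : swapAdj σ c = σ ∘ Equiv.swap c (c + 1) := by
  funext i
  simp only [swapAdj, Function.comp_apply, Equiv.swap_apply_def]
  split_ifs <;> rfl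

theorem PermOf.swapAdj (hσ : PermOf σ p α) (hc : c + 1 < p) : PermOf (swapAdj σ c) p α := by
  have hmaps : Set.MapsTo (Equiv.swap c (c + 1)) (Set.Iio p) (Set.Iio p) := fun i hi => by
    simp only [Set.mem_Iio, Equiv.swap_apply_def] at hi ⊢
    split_ifs <;> omega
  refine ⟨swapAdj_eq_comp ▸ hσ.1.comp (Equiv.injective _).injOn hmaps, fun a => ?_⟩
  rw [hσ.2, swapAdj_eq_comp]
  constructor
  · rintro ⟨i, hi, rfl⟩
    exact ⟨Equiv.swap c (c + 1) i, hmaps hi, by simp⟩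
  · rintro ⟨i, hi, rfl⟩
    exact ⟨_, hmaps hi, rfl⟩

theorem chainIdx_swapAdj_of_le {i : ℕ} (h : i ≤ c) :
    chainIdx m b j (swapAdj σ c) i = chainIdx m b j σ i := by
  induction i with
  | zero => rfl
  | succ i ih =>
    rw [chainIdx_succ, chainIdx_succ, ih (by omega), swapAdj, if_neg (by omega),
      if_neg (by omega)]

theorem chainIdx_swapAdj_succ :
    chainIdx m b j (swapAdj σ c) (c + 1) = b (m (chainIdx m b j σ c) + single (σ (c + 1)) 1) := by
  rw [chainIdx_succ, chainIdx_swapAdj_of_le le_rfl, swapAdj, if_pos rfl]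

theorem chainIdx_swapAdj_of_ne (hlq : HasLinearQuotients K m) (hb : IsDecompositionFunction K m b)
    (hreg : IsRegularDecomp K m b) {i : ℕ} (h : i ≠ c + 1) :
    chainIdx m b j (swapAdj σ c) i = chainIdx m b j σ i := by
  induction i with
  | zero => rfl
  | succ i ih =>
    rcases lt_trichotomy i (c + 1) with hi | rfl | hi
    · exact chainIdx_swapAdj_of_le (by omega)
    · rw [chainIdx_succ, chainIdx_swapAdj_succ, swapAdj, if_neg (by omega), if_pos rfl,
        decomp_step_comm hlq hb hreg]
      rfl
    · rw [chainIdx_succ, chainIdx_succ, ih (by omega), swapAdj, if_neg (by omega),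
        if_neg (by omega)]

theorem nondeg_swapAdj_iff (hmin : MinimalGens m) (hlq : HasLinearQuotients K m)
    (hb : IsDecompositionFunction K m b) (hreg : IsRegularDecomp K m b)
    (hnd : Nondeg m b (m j) σ p) (hc : c + 1 < p) :
    Nondeg m b (m j) (swapAdj σ c) p ↔
      σ c ∈ mset K m (b (m (chainIdx m b j σ c) + single (σ (c + 1)) 1)) := by
  have hσ := (nondeg_iff hmin hb).1 hnd
  rw [nondeg_iff hmin hb]
  refine ⟨fun h => ?_, fun h i hi => ?_⟩
  · simpa [chainIdx_swapAdj_succ, swapAdj] using h (c + 1) hc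
  · rcases lt_trichotomy i c with hic | rfl | hic
    · rw [chainIdx_swapAdj_of_le hic.le, swapAdj, if_neg (by omega), if_neg (by omega)]
      exact hσ i hi
    · rw [chainIdx_swapAdj_of_le le_rfl, swapAdj, if_pos rfl]
      exact mset_chainIdx_antitone hb hreg (Nat.le_succ i) (hσ (i + 1) hc)
    · rcases eq_or_ne i (c + 1) with rfl | hic'
      · rwa [chainIdx_swapAdj_succ, swapAdj, if_neg (by omega), if_pos rfl]
      · rw [chainIdx_swapAdj_of_ne hlq hb hreg hic', swapAdj, if_neg (by omega), if_neg hic']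
        exact hσ i hi

end Swap

def Nat.succAbove (p i : ℕ) : ℕ := if i < p then i else i + 1

theorem Nat.succAbove_of_lt {p i : ℕ} (h : i < p) : Nat.succAbove p i = i := if_pos h

theorem Nat.succAbove_of_le {p i : ℕ} (h : p ≤ i) : Nat.succAbove p i = i + 1 :=
  if_neg (not_lt.2 h)

theorem Nat.strictMono_succAbove (p : ℕ) : StrictMono (Nat.succAbove p) := fun i j h => by
  simp only [Nat.succAbove]
  split_ifs <;> omega

theorem Nat.image_succAbove_Iio {p i : ℕ} (hi : i ≤ p) :
    Nat.succAbove i '' Set.Iio p = Set.Iic p \ {i} := by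
  ext x
  simp only [Set.mem_image, Set.mem_Iio, Set.mem_sdiff, Set.mem_Iic, Set.mem_singleton_iff,
    Nat.succAbove]
  constructor
  · rintro ⟨r, hr, rfl⟩
    split_ifs <;> omega
  · rintro ⟨hx, hxi⟩
    refine ⟨if x < i then x else x - 1, by split_ifs <;> omega, ?_⟩
    split_ifs <;> omega

theorem StrictAntiOn.eq_succAbove_of_image_diff_eq {γ : Type*} [LinearOrder γ] {f g : ℕ → γ}
    {p i₀ i₁ : ℕ} (hf : StrictAntiOn f (Set.Iic p)) (hg : StrictAntiOn g (Set.Iic p))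
    (hi₀ : i₀ ≤ p) (hi₁ : i₁ ≤ p) (h : f '' (Set.Iic p \ {i₀}) = g '' (Set.Iic p \ {i₁})) :
    ∀ r < p, f (Nat.succAbove i₀ r) = g (Nat.succAbove i₁ r) := by
  have key : ∀ {f : ℕ → γ} {i : ℕ}, StrictAntiOn f (Set.Iic p) → i ≤ p →
      StrictAnti (fun r : Fin p => f (Nat.succAbove i r)) ∧
        Set.range (fun r : Fin p => f (Nat.succAbove i r)) = f '' (Set.Iic p \ {i}) := by
    intro f i hf hi
    have hmem : ∀ r : Fin p, Nat.succAbove i r ∈ Set.Iic p := fun r =>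
      (Nat.image_succAbove_Iio hi).subset ⟨r, r.isLt, rfl⟩ |>.1
    refine ⟨fun r r' hrr' => hf (hmem r) (hmem r') (Nat.strictMono_succAbove i hrr'), ?_⟩
    rw [← Nat.image_succAbove_Iio hi, ← Fin.range_val, ← Set.range_comp, ← Set.range_comp]
    rfl
  obtain ⟨hF, hFr⟩ := key hf hi₀
  obtain ⟨hG, hGr⟩ := key hg hi₁
  intro r hr
  exact congrFun ((hF.range_inj hG).1 (hFr.trans (h.trans hGr.symm))) ⟨r, hr⟩

theorem chainIdx_succAbove_eq_of_facet {j : Fin k} {σ τ : ℕ → Fin n} {p i₀ i₁ : ℕ}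
    (hmin : MinimalGens m) (hb : IsDecompositionFunction K m b)
    (hσn : Nondeg m b (m j) σ p) (hτn : Nondeg m b (m j) τ p) (hi₀ : i₀ ≤ p) (hi₁ : i₁ ≤ p)
    (hF : vertSet m b (m j) τ p \ {chainSeq m b (m j) τ i₀} =
      vertSet m b (m j) σ p \ {chainSeq m b (m j) σ i₁}) :
    ∀ r < p, chainIdx m b j τ (Nat.succAbove i₀ r) = chainIdx m b j σ (Nat.succAbove i₁ r) := by
  rw [vertSet_diff_eq_image hτn hi₀, vertSet_diff_eq_image hσn hi₁, chainSeq_eq_comp_chainIdx,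
    chainSeq_eq_comp_chainIdx, Set.image_comp, Set.image_comp] at hF
  exact (hτn.strictAntiOn hmin hb).eq_succAbove_of_image_diff_eq (hσn.strictAntiOn hmin hb)
    hi₀ hi₁ (Set.image_injective.2 hmin.injective hF)

theorem PermOf.exists_eq_of_cover {σ τ : ℕ → Fin n} {p : ℕ} {α : Finset (Fin n)}
    (hτ : PermOf τ p α) (hσ : PermOf σ p α) {q u v : ℕ} (hq : q < p)
    (hcover : ∀ a < p, a ≠ u → a ≠ v → ∃ i < p, i ≠ q ∧ τ i = σ a) :
    ∃ a < p, (a = u ∨ a = v) ∧ τ q = σ a := by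
  obtain ⟨a, ha, hqa⟩ := (hσ.2 _).1 ((hτ.2 _).2 ⟨q, hq, rfl⟩)
  refine ⟨a, ha, ?_, hqa.symm⟩
  by_contra! h
  obtain ⟨i, hi, hiq, hia⟩ := hcover a ha h.1 h.2
  exact hiq (hτ.1 hi hq (hia.trans hqa))

section Letters

variable {j : Fin k} {σ τ : ℕ → Fin n} {p c : ℕ}

theorem apply_eq_of_chainIdx_eq (hmin : MinimalGens m) (hb : IsDecompositionFunction K m b)
    (hσn : Nondeg m b (m j) σ p) {a a' : ℕ} (ha' : a' < p)
    (h0 : chainIdx m b j τ a = chainIdx m b j σ a')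
    (h1 : chainIdx m b j τ (a + 1) = chainIdx m b j σ (a' + 1)) : τ a = σ a' := by
  rw [chainIdx_succ, chainIdx_succ, h0] at h1
  exact eq_of_step_eq hmin hb h1
    (h1 ▸ (hb.step_lt_iff.2 ((nondeg_iff hmin hb).1 hσn a' ha')).ne)

theorem apply_eq_of_chainIdx_eq_add_two (hmin : MinimalGens m) (hb : IsDecompositionFunction K m b)
    (hσn : Nondeg m b (m j) σ p) (hc : c + 1 < p) {x : ℕ}
    (h0 : chainIdx m b j τ x = chainIdx m b j σ c)
    (h1 : chainIdx m b j τ (x + 1) = chainIdx m b j σ (c + 2)) :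
    τ x = σ (c + 1) ∧
      b (m (chainIdx m b j σ c) + single (σ (c + 1)) 1) = chainIdx m b j σ (c + 2) := by
  set g := chainIdx m b j σ
  have hσ := (nondeg_iff hmin hb).1 hσn
  have hlt₁ : g (c + 1) < g c := hb.step_lt_iff.2 (hσ c (by omega))
  have hlt₂ : g (c + 2) < g (c + 1) := hb.step_lt_iff.2 (hσ (c + 1) hc)
  rw [chainIdx_succ, h0] at h1
  have hex := apply_lt_step_apply hmin hb (h1 ▸ (hlt₂.trans hlt₁).ne)
  rw [h1] at hex
  have e₁ : m (g (c + 2)) ≤ m (g (c + 1)) + single (σ (c + 1)) 1 := hb.gen_le le_self_add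
  have e₂ : m (g (c + 1)) ≤ m (g c) + single (σ c) 1 := hb.gen_le le_self_add
  have hτx : τ x = σ (c + 1) := by
    by_contra hne
    have hτc : τ x = σ c := by
      by_contra hne'
      have := (e₁.trans (add_le_add_left e₂ _)) (τ x)
      simp [Ne.symm hne, Ne.symm hne'] at this
      omega
    rw [hτc] at h1
    exact hlt₂.ne h1.symm
  exact ⟨hτx, hτx ▸ h1⟩

end Letters

section Facet

variable {j : Fin k} {σ τ : ℕ → Fin n} {p c i₀ : ℕ} {α : Finset (Fin n)}

theorem eqOn_or_eqOn_swapAdj_of_succAbove_eq (hmin : MinimalGens m)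
    (hb : IsDecompositionFunction K m b) (hσ : PermOf σ p α) (hτ : PermOf τ p α)
    (hσn : Nondeg m b (m j) σ p) (hc : c + 1 < p)
    (hM : ∀ r < p, chainIdx m b j τ (Nat.succAbove (c + 1) r) =
      chainIdx m b j σ (Nat.succAbove (c + 1) r)) :
    Set.EqOn τ σ (Set.Iio p) ∨ Set.EqOn τ (swapAdj σ c) (Set.Iio p) := by
  have hv : ∀ i ≤ p, i ≠ c + 1 → chainIdx m b j τ i = chainIdx m b j σ i := by
    intro i hi hne
    obtain ⟨r, hr, rfl⟩ := (Nat.image_succAbove_Iio hc.le).symm.subset ⟨Set.mem_Iic.2 hi, hne⟩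
    exact hM r hr
  have hl : ∀ a < p, a ≠ c → a ≠ c + 1 → τ a = σ a := fun a ha h₁ h₂ =>
    apply_eq_of_chainIdx_eq hmin hb hσn ha (hv a ha.le h₂) (hv (a + 1) ha (by omega))
  have hcover : ∀ q, q = c ∨ q = c + 1 → ∃ a < p, (a = c ∨ a = c + 1) ∧ τ q = σ a :=
    fun q hq => hτ.exists_eq_of_cover hσ (by omega) fun a ha h₁ h₂ =>
      ⟨a, ha, by omega, hl a ha h₁ h₂⟩
  obtain ⟨a, -, ha, hτc⟩ := hcover c (.inl rfl)
  obtain ⟨a', -, ha', hτc'⟩ := hcover (c + 1) (.inr rfl)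
  have hne : a ≠ a' := by
    rintro rfl
    have := hτ.1 (Set.mem_Iio.2 (by omega)) (Set.mem_Iio.2 hc) (hτc.trans hτc'.symm)
    omega
  rcases ha with rfl | rfl
  · obtain rfl : a' = a + 1 := by omega
    refine .inl fun i hi => ?_
    by_cases hi₁ : i = a
    · rwa [hi₁]
    by_cases hi₂ : i = a + 1
    · rwa [hi₂]
    exact hl i hi hi₁ hi₂
  · obtain rfl : a' = c := by omega
    refine .inr fun i hi => ?_
    simp only [swapAdj]
    split_ifs with hi₁ hi₂
    · rwa [hi₁]
    · rwa [hi₂]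
    · exact hl i hi hi₁ hi₂

theorem apply_succAbove_eq (hmin : MinimalGens m) (hb : IsDecompositionFunction K m b)
    (hσn : Nondeg m b (m j) σ p) (hc : c + 1 < p) (hi₀ : i₀ ≠ c + 1)
    (hM : ∀ r < p, chainIdx m b j τ (Nat.succAbove i₀ r) =
      chainIdx m b j σ (Nat.succAbove (c + 1) r))
    {r : ℕ} (hr : r + 1 < p) (hri : r + 1 ≠ i₀) :
    τ (Nat.succAbove i₀ r) = σ (Nat.succAbove c r) := by
  have h₀ := hM r (by omega)
  have h₁ := hM (r + 1) hr
  rw [show Nat.succAbove i₀ (r + 1) = Nat.succAbove i₀ r + 1 by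
    simp only [Nat.succAbove]; split_ifs <;> omega] at h₁
  rcases eq_or_ne r c with rfl | hrc
  · simp only [Nat.succAbove, lt_self_iff_false, if_false, lt_add_iff_pos_right, zero_lt_one,
      if_true] at h₀ h₁ ⊢
    exact (apply_eq_of_chainIdx_eq_add_two hmin hb hσn hc h₀ h₁).1
  · have hs₀ : Nat.succAbove (c + 1) r = Nat.succAbove c r := by
      simp only [Nat.succAbove]; split_ifs <;> omega
    have hs₁ : Nat.succAbove (c + 1) (r + 1) = Nat.succAbove c r + 1 := by
      simp only [Nat.succAbove]; split_ifs <;> omega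
    rw [hs₀] at h₀
    rw [hs₁] at h₁
    exact apply_eq_of_chainIdx_eq hmin hb hσn
      (by simp only [Nat.succAbove]; split_ifs <;> omega) h₀ h₁

theorem exists_apply_eq_of_facet (hmin : MinimalGens m)
    (hb : IsDecompositionFunction K m b) (hσ : PermOf σ p α) (hτ : PermOf τ p α)
    (hσn : Nondeg m b (m j) σ p) (hc : c + 1 < p) (hpos : 0 < i₀) (hi₀ : i₀ ≠ c + 1)
    (hM : ∀ r < p, chainIdx m b j τ (Nat.succAbove i₀ r) =
      chainIdx m b j σ (Nat.succAbove (c + 1) r))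
    {q : ℕ} (hq : q = i₀ - 1 ∨ q = i₀) (hqp : q < p) :
    ∃ a < p, (a = c ∨ a = Nat.succAbove c (i₀ - 1)) ∧ τ q = σ a := by
  refine hτ.exists_eq_of_cover hσ hqp fun a ha hac ha' => ?_
  obtain ⟨r, hr⟩ : ∃ r, r = if a < c then a else a - 1 := ⟨_, rfl⟩
  have hra : Nat.succAbove c r = a := by simp only [Nat.succAbove]; split_ifs at hr ⊢ <;> omega
  have hri : r + 1 ≠ i₀ := by
    rintro rfl
    exact ha' (by rw [← hra, Nat.add_sub_cancel])
  refine ⟨Nat.succAbove i₀ r, ?_, ?_, hra ▸ apply_succAbove_eq hmin hb hσn hc hi₀ hM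
    (by split_ifs at hr <;> omega) hri⟩ <;>
  · simp only [Nat.succAbove]
    split_ifs at hr ⊢ <;> omega

theorem apply_pred_eq_of_facet (hmin : MinimalGens m)
    (hb : IsDecompositionFunction K m b) (hσ : PermOf σ p α) (hτ : PermOf τ p α)
    (hσn : Nondeg m b (m j) σ p) (hτn : Nondeg m b (m j) τ p) (hc : c + 1 < p)
    (hpos : 0 < i₀) (hi₀ : i₀ ≠ c + 1) (hi₀p : i₀ ≤ p)
    (hM : ∀ r < p, chainIdx m b j τ (Nat.succAbove i₀ r) =
      chainIdx m b j σ (Nat.succAbove (c + 1) r)) :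
    τ (i₀ - 1) = σ c := by
  obtain ⟨a, ha, hac | rfl, hτa⟩ :=
    exists_apply_eq_of_facet hmin hb hσ hτ hσn hc hpos hi₀ hM (.inl rfl) (by omega)
  · rwa [hac] at hτa
  have hlt : i₀ < p := by revert ha; simp only [Nat.succAbove]; split_ifs <;> omega
  have h₀ := hM (i₀ - 1) (by omega)
  have h₁ := hM i₀ hlt
  rw [show Nat.succAbove i₀ (i₀ - 1) = i₀ - 1 by simp only [Nat.succAbove]; split_ifs <;> omega,
    show Nat.succAbove (c + 1) (i₀ - 1) = Nat.succAbove c (i₀ - 1) by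
      simp only [Nat.succAbove]; split_ifs <;> omega] at h₀
  rw [show Nat.succAbove i₀ i₀ = i₀ + 1 by simp [Nat.succAbove],
    show Nat.succAbove (c + 1) i₀ = Nat.succAbove c (i₀ - 1) + 1 by
      simp only [Nat.succAbove]; split_ifs <;> omega] at h₁
  have h : chainIdx m b j τ i₀ = chainIdx m b j τ (i₀ + 1) := by
    obtain ⟨i, rfl⟩ : ∃ i, i₀ = i + 1 := ⟨i₀ - 1, by omega⟩
    rw [Nat.add_sub_cancel] at h₀ hτa h₁
    rw [h₁, chainIdx_succ, h₀, hτa]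
    rfl
  have := (nondeg_iff_injOn hmin).1 hτn (Set.mem_Iic.2 hlt.le) (Set.mem_Iic.2 hlt) h
  omega

theorem false_of_succAbove_eq_of_lt (hmin : MinimalGens m) (hlq : HasLinearQuotients K m)
    (hb : IsDecompositionFunction K m b) (hreg : IsRegularDecomp K m b)
    (hσ : PermOf σ p α) (hτ : PermOf τ p α)
    (hσn : Nondeg m b (m j) σ p) (hτn : Nondeg m b (m j) τ p) (hc : c + 1 < p)
    (hpos : 0 < i₀) (hlt : i₀ < c + 1)
    (hM : ∀ r < p, chainIdx m b j τ (Nat.succAbove i₀ r) =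
      chainIdx m b j σ (Nat.succAbove (c + 1) r)) : False := by
  have hτc := apply_pred_eq_of_facet hmin hb hσ hτ hσn hτn hc hpos hlt.ne (by omega) hM
  obtain ⟨a, -, hac | hac, hτa⟩ :=
    exists_apply_eq_of_facet hmin hb hσ hτ hσn hc hpos hlt.ne hM (.inr rfl) (by omega)
  · have := hτ.1 (Set.mem_Iio.2 (by omega)) (Set.mem_Iio.2 (by omega))
      (hτc.trans (hac ▸ hτa).symm)
    omega
  obtain ⟨i, rfl⟩ : ∃ i, i₀ = i + 1 := ⟨i₀ - 1, by omega⟩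
  have h₀ := hM i (by omega)
  have h₁ := hM (i + 1) (by omega)
  simp (disch := omega) only [Nat.succAbove_of_lt, Nat.succAbove_of_le] at h₀ h₁ hac
  simp only [Nat.add_sub_cancel, hac] at hτc hτa
  have hτstep : chainIdx m b j τ (i + 2) =
      b (m (b (m (chainIdx m b j σ i) + single (σ c) 1)) + single (σ i) 1) := by
    rw [chainIdx_succ, chainIdx_succ, h₀, hτc, hτa]
  have hfix : b (m (chainIdx m b j σ (i + 1)) + single (σ c) 1) = chainIdx m b j σ (i + 1) :=
    calc b (m (chainIdx m b j σ (i + 1)) + single (σ c) 1)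
        = b (m (b (m (chainIdx m b j σ i) + single (σ c) 1)) + single (σ i) 1) :=
          decomp_step_comm hlq hb hreg _ _ _
      _ = chainIdx m b j σ (i + 1) := hτstep.symm.trans h₁
  refine (hb.step_lt_iff.2 ?_).ne hfix
  exact mset_chainIdx_antitone hb hreg (by omega : i + 1 ≤ c)
    ((nondeg_iff hmin hb).1 hσn c (by omega))

theorem false_of_succAbove_eq_of_gt (hmin : MinimalGens m) (hlq : HasLinearQuotients K m)
    (hb : IsDecompositionFunction K m b) (hreg : IsRegularDecomp K m b)
    (hσ : PermOf σ p α) (hτ : PermOf τ p α)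
    (hσn : Nondeg m b (m j) σ p) (hτn : Nondeg m b (m j) τ p) (hc : c + 1 < p)
    (hgt : c + 1 < i₀) (hi₀ : i₀ ≤ p)
    (hM : ∀ r < p, chainIdx m b j τ (Nat.succAbove i₀ r) =
      chainIdx m b j σ (Nat.succAbove (c + 1) r)) : False := by
  have hτc := apply_pred_eq_of_facet hmin hb hσ hτ hσn hτn hc (by omega) hgt.ne' hi₀ hM
  have h₀ := hM c (by omega)
  have h₁ := hM (c + 1) hc
  have h₂ := hM (i₀ - 1) (by omega)
  simp (disch := omega) only [Nat.succAbove_of_lt, Nat.succAbove_of_le] at h₀ h₁ h₂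
  have hjump := (apply_eq_of_chainIdx_eq_add_two hmin hb hσn hc h₀ h₁).2
  have hfix : b (m (chainIdx m b j σ (c + 2)) + single (σ c) 1) = chainIdx m b j σ (c + 2) := by
    rw [← hjump, decomp_step_comm hlq hb hreg]
    exact hjump.symm
  refine (hb.step_lt_iff.2 ?_).ne hfix
  have hmem := (nondeg_iff hmin hb).1 hτn (i₀ - 1) (by omega)
  rw [hτc, h₂, Nat.sub_add_cancel (by omega)] at hmem
  exact mset_chainIdx_antitone hb hreg (by omega : c + 2 ≤ i₀) hmem

theorem eqOn_or_eqOn_swapAdj_of_facet (hmin : MinimalGens m) (hlq : HasLinearQuotients K m)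
    (hb : IsDecompositionFunction K m b) (hreg : IsRegularDecomp K m b)
    (hσ : PermOf σ p α) (hτ : PermOf τ p α)
    (hσn : Nondeg m b (m j) σ p) (hτn : Nondeg m b (m j) τ p) (hc : c + 1 < p) (hi₀ : i₀ ≤ p)
    (hF : vertSet m b (m j) τ p \ {chainSeq m b (m j) τ i₀} =
      vertSet m b (m j) σ p \ {chainSeq m b (m j) σ (c + 1)}) :
    Set.EqOn τ σ (Set.Iio p) ∨ Set.EqOn τ (swapAdj σ c) (Set.Iio p) := by
  have hM := chainIdx_succAbove_eq_of_facet hmin hb hσn hτn hi₀ hc.le hF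
  rcases lt_trichotomy i₀ (c + 1) with hlt | rfl | hgt
  · rcases Nat.eq_zero_or_pos i₀ with rfl | hpos
    · have h := hM 0 (by omega)
      simp (disch := omega) only [Nat.succAbove_of_lt, Nat.succAbove_of_le] at h
      have h' : chainIdx m b j τ 1 = chainIdx m b j τ 0 := h
      have := (nondeg_iff_injOn hmin).1 hτn (Set.mem_Iic.2 (by omega)) (Set.mem_Iic.2 (by omega)) h'
      omega
    · exact (false_of_succAbove_eq_of_lt hmin hlq hb hreg hσ hτ hσn hτn hc hpos hlt hM).elim
  · exact eqOn_or_eqOn_swapAdj_of_succAbove_eq hmin hb hσ hτ hσn hc hM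
  · exact (false_of_succAbove_eq_of_gt hmin hlq hb hreg hσ hτ hσn hτn hc hgt hi₀ hM).elim

end Facet

end

theorem stmt5_general (K : Type*) [Field K] {n k : ℕ} (m : Fin k → (Fin n →₀ ℕ))
    (hmin : MinimalGens m) (hlq : HasLinearQuotients K m)
    (b : (Fin n →₀ ℕ) → Fin k) (hb : IsDecompositionFunction K m b)
    (hreg : IsRegularDecomp K m b)
    (j : Fin k) (α : Finset (Fin n))
    (p : ℕ)
    (σ : ℕ → Fin n) (hσ : PermOf σ p α)
    (hnd : Nondeg m b (m j) σ p)
    (c : ℕ) (hc : c + 1 < p)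
    (F : Set (Fin n →₀ ℕ))
    (hF : F = vertSet m b (m j) σ p \ {chainSeq m b (m j) σ (c + 1)}) :
    (σ c ∈ mset K m (b (chainSeq m b (m j) σ c + Finsupp.single (σ (c + 1)) 1)) →
      (PermOf (swapAdj σ c) p α ∧ Nondeg m b (m j) (swapAdj σ c) p ∧
        IsFacetOf m b (m j) (swapAdj σ c) p F ∧
        ∀ τ : ℕ → Fin n, PermOf τ p α → Nondeg m b (m j) τ p →
          IsFacetOf m b (m j) τ p F →
          (vertSet m b (m j) τ p = vertSet m b (m j) σ p ∨
            vertSet m b (m j) τ p = vertSet m b (m j) (swapAdj σ c) p))) ∧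
    (σ c ∉ mset K m (b (chainSeq m b (m j) σ c + Finsupp.single (σ (c + 1)) 1)) →
      ∀ τ : ℕ → Fin n, PermOf τ p α → Nondeg m b (m j) τ p →
        IsFacetOf m b (m j) τ p F →
        vertSet m b (m j) τ p = vertSet m b (m j) σ p) := by
  have hswap : Nondeg m b (m j) (swapAdj σ c) p ↔
      σ c ∈ mset K m (b (chainSeq m b (m j) σ c + single (σ (c + 1)) 1)) := by
    rw [chainSeq_eq_comp_chainIdx]
    exact nondeg_swapAdj_iff hmin hlq hb hreg hnd hc
  have hunique : ∀ τ, PermOf τ p α → Nondeg m b (m j) τ p → IsFacetOf m b (m j) τ p F →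
      Set.EqOn τ σ (Set.Iio p) ∨ Set.EqOn τ (swapAdj σ c) (Set.Iio p) := by
    rintro τ hτ hτn ⟨i₀, hi₀, hτF⟩
    exact eqOn_or_eqOn_swapAdj_of_facet hmin hlq hb hreg hσ hτ hnd hτn hc hi₀ (hτF.symm.trans hF)
  refine ⟨fun hin => ⟨hσ.swapAdj hc, hswap.2 hin, ⟨c + 1, hc.le, ?_⟩, fun τ hτ hτn hτF =>
    (hunique τ hτ hτn hτF).imp vertSet_eq_of_eqOn vertSet_eq_of_eqOn⟩, fun hout τ hτ hτn hτF => ?_⟩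
  · rw [hF, vertSet_diff_eq_image hnd hc.le, vertSet_diff_eq_image (hswap.2 hin) hc.le,
      chainSeq_eq_comp_chainIdx, chainSeq_eq_comp_chainIdx]
    exact Set.image_congr fun i hi => congrArg m (chainIdx_swapAdj_of_ne hlq hb hreg hi.2).symm
  · rcases hunique τ hτ hτn hτF with h | h
    · exact vertSet_eq_of_eqOn h
    · exact (hout (hswap.1 ((chainSeq_eqOn_of_eqOn h).injOn_iff.1 hτn))).elim

/-- Let `F` be the facet of the nondegenerate simplex `ch(m,α,σ)` obtained
by omitting the vertex `m_ℓ` (`1 ≤ ℓ ≤ p-1`; 0-based, `ℓ = c+1` with `c+1 < p`).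
(a) If `σ_ℓ ∈ set(b(x_{σ_{ℓ+1}}·m_{ℓ-1}))` then `F` is interior: it is also a facet of
the nondegenerate simplex `ch(m,α,σ')` where `σ'` swaps positions `ℓ, ℓ+1` of `σ`, and
these are the only two nondegenerate simplices `ch(m,α,τ)` containing `F` as a facet.
(b) If `σ_ℓ ∉ set(b(x_{σ_{ℓ+1}}·m_{ℓ-1}))` then `F` is exterior: `ch(m,α,σ)` is the
only nondegenerate simplex of the form `ch(m,α,τ)` containing `F` as a facet. -/
theorem stmt5 (K : Type*) [Field K] {n k : ℕ} (m : Fin k → (Fin n →₀ ℕ))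
    (hmin : MinimalGens m) (hlq : HasLinearQuotients K m)
    (b : (Fin n →₀ ℕ) → Fin k) (hb : IsDecompositionFunction K m b)
    (hreg : IsRegularDecomp K m b)
    (j : Fin k) (α : Finset (Fin n)) (hα : ↑α ⊆ mset K m j)
    (p : ℕ) (hcard : α.card = p)
    (σ : ℕ → Fin n) (hσ : PermOf σ p α)
    (hnd : Nondeg m b (m j) σ p)
    (c : ℕ) (hc : c + 1 < p)
    (F : Set (Fin n →₀ ℕ))
    (hF : F = vertSet m b (m j) σ p \ {chainSeq m b (m j) σ (c + 1)}) :
    (σ c ∈ mset K m (b (chainSeq m b (m j) σ c + Finsupp.single (σ (c + 1)) 1)) →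
      (PermOf (swapAdj σ c) p α ∧ Nondeg m b (m j) (swapAdj σ c) p ∧
        IsFacetOf m b (m j) (swapAdj σ c) p F ∧
        ∀ τ : ℕ → Fin n, PermOf τ p α → Nondeg m b (m j) τ p →
          IsFacetOf m b (m j) τ p F →
          (vertSet m b (m j) τ p = vertSet m b (m j) σ p ∨
            vertSet m b (m j) τ p = vertSet m b (m j) (swapAdj σ c) p))) ∧
    (σ c ∉ mset K m (b (chainSeq m b (m j) σ c + Finsupp.single (σ (c + 1)) 1)) →
      ∀ τ : ℕ → Fin n, PermOf τ p α → Nondeg m b (m j) τ p →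
        IsFacetOf m b (m j) τ p F →
        vertSet m b (m j) τ p = vertSet m b (m j) σ p) :=
  stmt5_general K m hmin hlq b hb hreg j α p σ hσ hnd c hc F hF
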